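/- Let {a_i}_{i=1}^d and {b_j}_{j=1}^d be mutually unbiased orthonormal bases of ℂ^d, and let A = {|a_i⟩⟨a_i|} and B = {|b_j⟩⟨b_j|} be the corresponding non-degenerate projective observables. Then q^{A→B}_ρ(j) = 1/d for every density matrix ρ and every j, and Q_1(A→B) = 1 − 1/d, the supremum being attained at ρ = |b_1⟩⟨b_1|. -/

import Mathlib

/-! For a rank-one projection `P = |v⟩⟨v|` one has `P X P = ⟨v, X v⟩ P`, so the measurement
channel of `A` maps every `|b_j⟩⟨b_j|` to `(1/d) • 1`. The channel is self-dual for the trace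
pairing, hence `q^{A→B}_ρ(j) = tr(E^A(|b_j⟩⟨b_j|) ρ) = 1/d`. The variational distance of a
probability vector from the uniform one is at most `1 - 1/d`, with equality at a point mass,
which is `p^B_ρ` for `ρ = |b_1⟩⟨b_1|`. -/

open scoped BigOperators ComplexOrder
open Matrix

noncomputable section

/-- A projective observable: a finite family of mutually orthogonal
self-adjoint idempotents summing to the identity. -/
def IsProjObs {d r : ℕ} (P : Fin r → Matrix (Fin d) (Fin d) ℂ) : Prop :=
  (∀ i, (P i).IsHermitian) ∧ (∀ i, P i * P i = P i) ∧
    (∀ i k, i ≠ k → P i * P k = 0) ∧ (∑ i, P i = 1)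

/-- A density matrix: positive semidefinite with unit trace. -/
def IsDensity {d : ℕ} (ρ : Matrix (Fin d) (Fin d) ℂ) : Prop :=
  ρ.PosSemidef ∧ ρ.trace = 1

/-- The measurement channel `E^A(ρ) = Σ_i P_i ρ P_i` of a projective observable. -/
def measChannel {d r : ℕ} (P : Fin r → Matrix (Fin d) (Fin d) ℂ)
    (ρ : Matrix (Fin d) (Fin d) ℂ) : Matrix (Fin d) (Fin d) ℂ :=
  ∑ i, P i * ρ * P i

/-- `p^B_ρ(j) = tr(P^B_j ρ)`. -/
def probB {d rB : ℕ} (Q : Fin rB → Matrix (Fin d) (Fin d) ℂ)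
    (ρ : Matrix (Fin d) (Fin d) ℂ) (j : Fin rB) : ℝ :=
  ((Q j * ρ).trace).re

/-- `q^{A→B}_ρ(j) = tr(P^B_j Σ_i P^A_i ρ P^A_i)`. -/
def probAB {d rA rB : ℕ} (P : Fin rA → Matrix (Fin d) (Fin d) ℂ)
    (Q : Fin rB → Matrix (Fin d) (Fin d) ℂ)
    (ρ : Matrix (Fin d) (Fin d) ℂ) (j : Fin rB) : ℝ :=
  ((Q j * measChannel P ρ).trace).re

open Classical in
/-- The positive semidefinite square root of a PSD matrix (junk value `0` otherwise). -/
noncomputable def msqrt {d : ℕ} (A : Matrix (Fin d) (Fin d) ℂ) :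
    Matrix (Fin d) (Fin d) ℂ :=
  if h : A.PosSemidef then
    h.1.eigenvectorUnitary.1 * diagonal ((↑) ∘ (Real.sqrt ·) ∘ h.1.eigenvalues) *
      (star h.1.eigenvectorUnitary : Matrix (Fin d) (Fin d) ℂ)
  else 0

/-- `|X| = √(Xᴴ X)`, the positive semidefinite absolute value of a matrix. -/
noncomputable def matAbs {d : ℕ} (X : Matrix (Fin d) (Fin d) ℂ) :
    Matrix (Fin d) (Fin d) ℂ :=
  msqrt (Xᴴ * X)

/-- The quantum fidelity `F(ρ,σ) = tr √(√ρ σ √ρ)`. -/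
noncomputable def qFid {d : ℕ} (ρ σ : Matrix (Fin d) (Fin d) ℂ) : ℝ :=
  ((msqrt (msqrt ρ * σ * msqrt ρ)).trace).re

/-- Variational distance `D_1(p,q) = (1/2) Σ_j |p_j − q_j|`. -/
def distL1 {rB : ℕ} (p q : Fin rB → ℝ) : ℝ := (1 / 2) * ∑ j, |p j - q j|

/-- Chebyshev distance `D_∞(p,q) = max_j |p_j − q_j|`. -/
noncomputable def distLinf {rB : ℕ} (p q : Fin rB → ℝ) : ℝ := ⨆ j, |p j - q j|

/-- Classical fidelity `F(p,q) = Σ_j √(p_j q_j)`. -/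
noncomputable def classFid {rB : ℕ} (p q : Fin rB → ℝ) : ℝ :=
  ∑ j, Real.sqrt (p j * q j)

/-- `Q_1(A→B)`. -/
noncomputable def Q1 {d rA rB : ℕ} (P : Fin rA → Matrix (Fin d) (Fin d) ℂ)
    (Q : Fin rB → Matrix (Fin d) (Fin d) ℂ) : ℝ :=
  sSup {x : ℝ | ∃ ρ, IsDensity ρ ∧ x = distL1 (probAB P Q ρ) (probB Q ρ)}

/-- `Q_∞(A→B)`. -/
noncomputable def Qinf {d rA rB : ℕ} (P : Fin rA → Matrix (Fin d) (Fin d) ℂ)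
    (Q : Fin rB → Matrix (Fin d) (Fin d) ℂ) : ℝ :=
  sSup {x : ℝ | ∃ ρ, IsDensity ρ ∧ x = distLinf (probAB P Q ρ) (probB Q ρ)}

/-- `Q_F(A→B)`. -/
noncomputable def QF {d rA rB : ℕ} (P : Fin rA → Matrix (Fin d) (Fin d) ℂ)
    (Q : Fin rB → Matrix (Fin d) (Fin d) ℂ) : ℝ :=
  sSup {x : ℝ | ∃ ρ, IsDensity ρ ∧
    x = 1 - (classFid (probAB P Q ρ) (probB Q ρ)) ^ 2}

/-- The rank-one projection `|v⟩⟨v|` onto a (unit) vector `v`. -/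
def proj {d : ℕ} (v : Fin d → ℂ) : Matrix (Fin d) (Fin d) ℂ :=
  Matrix.vecMulVec v (star v)

lemma proj_mul_proj_mul_proj {d : ℕ} (v u : Fin d → ℂ) :
    proj v * proj u * proj v = (Complex.normSq (star v ⬝ᵥ u) : ℂ) • proj v := by
  rw [proj, proj, vecMulVec_mul_vecMulVec, vecMulVec_mul_vecMulVec, smul_dotProduct, smul_eq_mul,
    vecMulVec_smul, Complex.normSq_eq_conj_mul_self, star_dotProduct u, mul_comm]
  rfl

lemma trace_proj_mul_proj {d : ℕ} (u v : Fin d → ℂ) :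
    (proj u * proj v).trace = (star u ⬝ᵥ v) * (star v ⬝ᵥ u) := by
  rw [proj, proj, vecMulVec_mul_vecMulVec, trace_vecMulVec, dotProduct_smul, smul_eq_mul,
    dotProduct_comm u]

lemma sum_proj_eq_one {d : ℕ} (v : Fin d → Fin d → ℂ)
    (hv : ∀ i j, star (v i) ⬝ᵥ v j = if i = j then 1 else 0) :
    ∑ i, proj (v i) = 1 := by
  set M : Matrix (Fin d) (Fin d) ℂ := Matrix.of fun x i => v i x
  have hM : Mᴴ * M = 1 := by
    ext i j
    simpa [M, Matrix.mul_apply, dotProduct, Matrix.one_apply] using hv i j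
  calc ∑ i, proj (v i) = M * Mᴴ := by
        ext x y
        simp [M, proj, Matrix.sum_apply, Matrix.mul_apply, vecMulVec_apply]
    _ = 1 := mul_eq_one_comm.mp hM

lemma isDensity_proj {d : ℕ} (v : Fin d → ℂ) (hv : star v ⬝ᵥ v = 1) :
    IsDensity (proj v) :=
  ⟨posSemidef_vecMulVec_self_star v, by rw [proj, trace_vecMulVec, dotProduct_comm, hv]⟩

lemma trace_mul_measChannel {d r : ℕ} (P : Fin r → Matrix (Fin d) (Fin d) ℂ)
    (Q ρ : Matrix (Fin d) (Fin d) ℂ) :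
    (Q * measChannel P ρ).trace = (measChannel P Q * ρ).trace := by
  simp only [measChannel, Finset.mul_sum, Finset.sum_mul, trace_sum]
  refine Finset.sum_congr rfl fun i _ => ?_
  rw [← Matrix.mul_assoc, Matrix.trace_mul_comm, ← Matrix.mul_assoc, ← Matrix.mul_assoc]

lemma measChannel_proj_of_unbiased {d : ℕ} (a : Fin d → Fin d → ℂ)
    (ha : ∀ i j, star (a i) ⬝ᵥ a j = if i = j then 1 else 0) (w : Fin d → ℂ) {c : ℝ}
    (hw : ∀ i, Complex.normSq (star (a i) ⬝ᵥ w) = c) :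
    measChannel (fun i => proj (a i)) (proj w) = (c : ℂ) • 1 := by
  simp only [measChannel, proj_mul_proj_mul_proj, hw, ← Finset.smul_sum, sum_proj_eq_one a ha]

lemma probAB_proj_of_unbiased {d : ℕ} (a b : Fin d → Fin d → ℂ)
    (ha : ∀ i j, star (a i) ⬝ᵥ a j = if i = j then 1 else 0) {c : ℝ}
    (hab : ∀ i j, Complex.normSq (star (a i) ⬝ᵥ b j) = c) (ρ : Matrix (Fin d) (Fin d) ℂ)
    (j : Fin d) :
    probAB (fun i => proj (a i)) (fun j => proj (b j)) ρ j = c * ρ.trace.re := by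
  rw [probAB, trace_mul_measChannel, measChannel_proj_of_unbiased a ha (b j) (hab · j),
    smul_mul_assoc, Matrix.one_mul, trace_smul, smul_eq_mul, Complex.re_ofReal_mul]

lemma probB_proj_nonneg {d : ℕ} (v : Fin d → Fin d → ℂ) {ρ : Matrix (Fin d) (Fin d) ℂ}
    (hρ : ρ.PosSemidef) (j : Fin d) : 0 ≤ probB (fun j => proj (v j)) ρ j := by
  rw [probB, Matrix.trace_mul_comm, proj, mul_vecMulVec, trace_vecMulVec, dotProduct_comm]
  exact (Complex.nonneg_iff.mp (hρ.dotProduct_mulVec_nonneg (v j))).1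

lemma sum_probB {d r : ℕ} (Q : Fin r → Matrix (Fin d) (Fin d) ℂ) (hQ : ∑ j, Q j = 1)
    {ρ : Matrix (Fin d) (Fin d) ℂ} (hρ : ρ.trace = 1) : ∑ j, probB Q ρ j = 1 := by
  simp only [probB, ← Complex.re_sum, ← trace_sum, ← Finset.sum_mul, hQ, Matrix.one_mul, hρ,
    Complex.one_re]

lemma probB_proj_self {d : ℕ} (b : Fin d → Fin d → ℂ)
    (hb : ∀ i j, star (b i) ⬝ᵥ b j = if i = j then 1 else 0) (k : Fin d) :
    probB (fun j => proj (b j)) (proj (b k)) = Pi.single k 1 := by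
  ext j
  rw [probB, trace_proj_mul_proj, hb, hb]
  by_cases h : j = k
  · subst h; simp
  · simp [h, Ne.symm h]

lemma distL1_uniform_le {n : ℕ} (p : Fin n → ℝ) (hp : ∀ j, 0 ≤ p j)
    (hsum : ∑ j, p j = 1) :
    distL1 (fun _ => 1 / (n : ℝ)) p ≤ 1 - 1 / n := by
  rcases Nat.eq_zero_or_pos n with rfl | hn
  · simp at hsum
  set c : ℝ := 1 / n
  have hc0 : 0 ≤ c := by positivity
  have hc1 : c ≤ 1 := div_le_one_of_le₀ (by exact_mod_cast hn) n.cast_nonneg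
  have hnc : n * c = 1 := mul_one_div_cancel (by positivity)
  have hp1 (j : Fin n) : p j ≤ 1 :=
    hsum ▸ Finset.single_le_sum (fun i _ => hp i) (Finset.mem_univ j)
  -- the convex function `|c - x|` lies below its chord on `[0, 1]`
  have hchord (j : Fin n) : |c - p j| ≤ p j * (1 - 2 * c) + c := by
    rw [abs_le]
    constructor <;> nlinarith [hp j, hp1 j, hc0, hc1]
  calc distL1 (fun _ => c) p ≤ 1 / 2 * ∑ j, (p j * (1 - 2 * c) + c) :=
        mul_le_mul_of_nonneg_left (Finset.sum_le_sum fun j _ => hchord j) (by norm_num)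
    _ = 1 - c := by
        rw [Finset.sum_add_distrib, ← Finset.sum_mul, hsum, Finset.sum_const, Finset.card_univ,
          Fintype.card_fin, nsmul_eq_mul, hnc]
        ring

lemma distL1_uniform_single {n : ℕ} (k : Fin n) :
    distL1 (fun _ => 1 / (n : ℝ)) (Pi.single k 1) = 1 - 1 / n := by
  have hn : (1 : ℝ) ≤ n := by exact_mod_cast k.pos
  have hterm (j : Fin n) : |1 / (n : ℝ) - (Pi.single k 1 : Fin n → ℝ) j|
      = 1 / n + (Pi.single k (1 - 2 / n) : Fin n → ℝ) j := by
    by_cases h : j = k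
    · subst h
      have : 1 / (n : ℝ) ≤ 1 := div_le_one_of_le₀ hn n.cast_nonneg
      rw [Pi.single_eq_same, Pi.single_eq_same, abs_of_nonpos (by linarith)]
      ring
    · simp [Pi.single_eq_of_ne h]
  rw [distL1, Finset.sum_congr rfl fun j _ => hterm j, Finset.sum_add_distrib,
    Finset.sum_pi_single', if_pos (Finset.mem_univ k), Finset.sum_const, Finset.card_univ,
    Fintype.card_fin, nsmul_eq_mul]
  field_simp
  ring

theorem stmt_12 {d : ℕ} (hd : 0 < d)
    (a b : Fin d → (Fin d → ℂ))
    (ha : ∀ i j, star (a i) ⬝ᵥ a j = if i = j then 1 else 0)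
    (hb : ∀ i j, star (b i) ⬝ᵥ b j = if i = j then 1 else 0)
    (hmub : ∀ i j, Complex.normSq (star (a i) ⬝ᵥ b j) = 1 / (d : ℝ)) :
    (∀ ρ : Matrix (Fin d) (Fin d) ℂ, IsDensity ρ →
        ∀ j, probAB (fun i => proj (a i)) (fun j => proj (b j)) ρ j = 1 / (d : ℝ)) ∧
      Q1 (fun i => proj (a i)) (fun j => proj (b j)) = 1 - 1 / (d : ℝ) ∧
      distL1 (probAB (fun i => proj (a i)) (fun j => proj (b j)) (proj (b ⟨0, hd⟩)))
          (probB (fun j => proj (b j)) (proj (b ⟨0, hd⟩)))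
        = 1 - 1 / (d : ℝ) := by
  have hq : ∀ ρ : Matrix (Fin d) (Fin d) ℂ, IsDensity ρ →
      ∀ j, probAB (fun i => proj (a i)) (fun j => proj (b j)) ρ j = 1 / (d : ℝ) := by
    intro ρ hρ j
    rw [probAB_proj_of_unbiased a b ha hmub, hρ.2, Complex.one_re, mul_one]
  have hρ₀ : IsDensity (proj (b ⟨0, hd⟩)) := isDensity_proj _ (by simp [hb])
  have hattained :
      distL1 (probAB (fun i => proj (a i)) (fun j => proj (b j)) (proj (b ⟨0, hd⟩)))
        (probB (fun j => proj (b j)) (proj (b ⟨0, hd⟩))) = 1 - 1 / (d : ℝ) := by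
    rw [funext (hq _ hρ₀), probB_proj_self b hb, distL1_uniform_single]
  refine ⟨hq, IsGreatest.csSup_eq ⟨⟨_, hρ₀, hattained.symm⟩, ?_⟩, hattained⟩
  rintro x ⟨ρ, hρ, rfl⟩
  rw [funext (hq ρ hρ)]
  exact distL1_uniform_le _ (probB_proj_nonneg b hρ.1)
    (sum_probB _ (sum_proj_eq_one b hb) hρ.2)

end
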